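/- arXiv:1606.05460 — 2 statements merged into one kernel-verified Lean document; each statement's English description precedes it below -/
import Mathlib

section
/- Bibasic form of Ramanujan's Entry 1.4.1: Let q, h, t be complex numbers with |q^h| < 1, |q^t| < 1 and |q^{ht}| < 1 (principal complex powers), let a, b, c, d be complex numbers with a ≠ 0, d ≠ 0, |a q^t| < 1 and |d q^h| < 1, such that all denominators below are nonzero. Then [(aq^t;q^t)_∞ (cq;q^h)_∞ / ((−bq;q^t)_∞ (dq^h;q^h)_∞)] · ∑_{j=0}^∞ [(−bq/a;q^t)_j / (q^t;q^t)_j] · [(dq^h;q^h)_{tj} / (cq;q^h)_{tj+1}] · (aq^t)^j = ∑_{k=0}^∞ [(cq/d;q^h)_k / (q^h;q^h)_k] · [(aq^t;q^t)_{hk} / (−bq;q^t)_{hk+1}] · (dq^h)^k. -/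
open Complex

/-- Finite q-Pochhammer symbol `(A;Q)_k = ∏_{r=0}^{k-1} (1 - A Q^r)`. -/
noncomputable def qp (A Q : ℂ) (k : ℕ) : ℂ := ∏ r ∈ Finset.range k, (1 - A * Q ^ r)

/-- Infinite q-Pochhammer symbol `(A;Q)_∞ = ∏_{r=0}^{∞} (1 - A Q^r)`. -/
noncomputable def qpInf (A Q : ℂ) : ℂ := ∏' r : ℕ, (1 - A * Q ^ r)

/-- q-Pochhammer symbol with (possibly non-integer) index:
`(A;Q)_{c k} := (A;Q)_∞ / (A R^k;Q)_∞` where `R = Q^c`. -/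
noncomputable def qpc (A Q R : ℂ) (k : ℕ) : ℂ := qpInf A Q / qpInf (A * R ^ k) Q

/-- q-Pochhammer symbol with shifted (possibly non-integer) index:
`(A;Q)_{c k + 1} := (A;Q)_∞ / (A Q R^k;Q)_∞` where `R = Q^c`. -/
noncomputable def qpc1 (A Q R : ℂ) (k : ℕ) : ℂ := qpInf A Q / qpInf (A * Q * R ^ k) Q

/-!
By the q-binomial theorem `∑ₙ (α;p)ₙ/(p;p)ₙ zⁿ = (αz;p)_∞/(z;p)_∞`, the ratio
`(dq^h;q^h)_{tj} / (cq;q^h)_{tj+1}` is `(dq^h;q^h)_∞/(cq;q^h)_∞` times the q-binomial series in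
`z = dq^h Q^j`, `Q = q^{ht}`, and symmetrically on the right-hand side with `z = aq^t Q^k`.
Both sides thus become the same absolutely convergent double series with weight `Q^{jk}`,
summed in the two possible orders.
-/

open Filter Topology

section InfiniteProduct

variable {P : ℂ}

lemma norm_mul_pow_le (A : ℂ) (hP : ‖P‖ ≤ 1) (r : ℕ) : ‖A * P ^ r‖ ≤ ‖A‖ := by
  rw [norm_mul, norm_pow]
  exact mul_le_of_le_one_right (norm_nonneg A) (pow_le_one₀ (norm_nonneg P) hP)

lemma one_sub_ne_zero_of_norm_lt_one {x : ℂ} (hx : ‖x‖ < 1) : 1 - x ≠ 0 := by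
  rw [sub_ne_zero]
  rintro rfl
  simp at hx

lemma summable_norm_neg_mul_pow (A : ℂ) (hP : ‖P‖ < 1) :
    Summable fun r : ℕ => ‖-(A * P ^ r)‖ := by
  simpa [norm_mul, norm_pow] using
    (summable_geometric_of_lt_one (norm_nonneg P) hP).mul_left ‖A‖

lemma multipliable_qpInf (A : ℂ) (hP : ‖P‖ < 1) :
    Multipliable fun r : ℕ => 1 - A * P ^ r := by
  simpa only [sub_eq_add_neg] using
    multipliable_one_add_of_summable (summable_norm_neg_mul_pow A hP)

lemma qpInf_ne_zero {A : ℂ} (hA : ‖A‖ < 1) (hP : ‖P‖ < 1) : qpInf A P ≠ 0 := by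
  simp only [qpInf, sub_eq_add_neg]
  refine tprod_one_add_ne_zero_of_summable (fun r => ?_) (summable_norm_neg_mul_pow A hP)
  rw [← sub_eq_add_neg]
  exact one_sub_ne_zero_of_norm_lt_one ((norm_mul_pow_le A hP.le r).trans_lt hA)

lemma qpInf_eq_one_sub_mul (A : ℂ) (hP : ‖P‖ < 1) :
    qpInf A P = (1 - A) * qpInf (A * P) P := by
  have hshift : ∀ r : ℕ, A * P ^ (r + 1) = A * P * P ^ r := fun r => by ring
  rw [qpInf, tprod_eq_zero_mul' (by simpa only [hshift] using multipliable_qpInf (A * P) hP)]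
  simp only [hshift, pow_zero, mul_one, qpInf]

lemma tendsto_qp_qpInf (A : ℂ) (hP : ‖P‖ < 1) :
    Tendsto (qp A P) atTop (𝓝 (qpInf A P)) :=
  (multipliable_qpInf A hP).hasProd.tendsto_prod_nat

lemma tendsto_qpInf_nhds_zero (hP : ‖P‖ < 1) : Tendsto (qpInf · P) (𝓝 0) (𝓝 1) := by
  have hbound : ∀ᶠ w in 𝓝 (0 : ℂ), ∀ r : ℕ, ‖-(w * P ^ r)‖ ≤ ‖P‖ ^ r := by
    filter_upwards [Metric.closedBall_mem_nhds (0 : ℂ) one_pos] with w hw r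
    rw [mem_closedBall_zero_iff] at hw
    rw [norm_neg, norm_mul, norm_pow]
    exact mul_le_of_le_one_left (by positivity) hw
  have := tendsto_tprod_one_add_of_dominated_convergence (g := fun _ => 0)
    (summable_geometric_of_lt_one (norm_nonneg P) hP)
    (fun r => by simpa using ((tendsto_id (x := 𝓝 (0 : ℂ))).mul_const (P ^ r)).neg) hbound
  simpa [qpInf, sub_eq_add_neg] using this

end InfiniteProduct

section QBinomial

variable {α p z : ℂ}

lemma exists_norm_qp_div_qp_le (α : ℂ) (hp : ‖p‖ < 1) :
    ∃ M, ∀ n, ‖qp α p n / qp p p n‖ ≤ M := by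
  have hlim : Tendsto (fun n => qp α p n / qp p p n) atTop (𝓝 (qpInf α p / qpInf p p)) :=
    (tendsto_qp_qpInf α hp).div (tendsto_qp_qpInf p hp) (qpInf_ne_zero hp hp)
  obtain ⟨M, hM⟩ := isBounded_iff_forall_norm_le.1 (Metric.isBounded_range_of_tendsto _ hlim)
  exact ⟨M, fun n => hM _ ⟨n, rfl⟩⟩

lemma summable_norm_qbinomial (α : ℂ) (hp : ‖p‖ < 1) (hz : ‖z‖ < 1) :
    Summable fun n => ‖qp α p n / qp p p n * z ^ n‖ := by
  obtain ⟨M, hM⟩ := exists_norm_qp_div_qp_le α hp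
  refine .of_nonneg_of_le (fun _ => norm_nonneg _) (fun n => ?_)
    ((summable_geometric_of_lt_one (norm_nonneg z) hz).mul_left M)
  rw [norm_mul, norm_pow]
  exact mul_le_mul_of_nonneg_right (hM n) (by positivity)

lemma qp_div_qp_succ_mul (α : ℂ) (hp : ‖p‖ < 1) (n : ℕ) :
    qp α p (n + 1) / qp p p (n + 1) * (1 - p ^ (n + 1))
      = qp α p n / qp p p n * (1 - α * p ^ n) := by
  have hne : 1 - p ^ (n + 1) ≠ 0 := one_sub_ne_zero_of_norm_lt_one <| by
    rw [norm_pow]; exact pow_lt_one₀ (norm_nonneg p) hp n.succ_ne_zero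
  simp only [qp, Finset.prod_range_succ, ← pow_succ']
  field_simp

lemma one_sub_mul_tsum_qbinomial (α : ℂ) (hp : ‖p‖ < 1) (hz : ‖z‖ < 1) :
    (1 - z) * ∑' n, qp α p n / qp p p n * z ^ n
      = (1 - α * z) * ∑' n, qp α p n / qp p p n * (p * z) ^ n := by
  set c : ℕ → ℂ := fun n => qp α p n / qp p p n
  have hpz : ‖p * z‖ < 1 := by simpa [mul_comm] using (norm_mul_pow_le z hp.le 1).trans_lt hz
  have hs : Summable fun n => c n * z ^ n := (summable_norm_qbinomial α hp hz).of_norm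
  have hs' : Summable fun n => c n * (p * z) ^ n := (summable_norm_qbinomial α hp hpz).of_norm
  have hsg : Summable fun n => c n * (1 - p ^ n) * z ^ n :=
    (hs.sub hs').congr fun n => by ring
  have hg : ∑' n, c n * z ^ n - ∑' n, c n * (p * z) ^ n
      = ∑' n, c n * (1 - p ^ n) * z ^ n := by
    rw [← hs.tsum_sub hs']
    exact tsum_congr fun n => by ring
  have hh : ∑' n, c n * z ^ n - α * ∑' n, c n * (p * z) ^ n
      = ∑' n, c n * (1 - α * p ^ n) * z ^ n := by
    rw [← tsum_mul_left, ← hs.tsum_sub (hs'.mul_left α)]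
    exact tsum_congr fun n => by ring
  have hshift : ∑' n, c n * (1 - p ^ n) * z ^ n = z * ∑' n, c n * (1 - α * p ^ n) * z ^ n := by
    rw [hsg.tsum_eq_zero_add, ← tsum_mul_left]
    simp only [pow_zero, sub_self, mul_zero, zero_mul, zero_add]
    refine tsum_congr fun n => ?_
    have hrec : c (n + 1) * (1 - p ^ (n + 1)) = c n * (1 - α * p ^ n) := qp_div_qp_succ_mul α hp n
    linear_combination z ^ (n + 1) * hrec
  show (1 - z) * ∑' n, c n * z ^ n = (1 - α * z) * ∑' n, c n * (p * z) ^ n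
  linear_combination hg - z * hh + hshift

lemma tendsto_tsum_qbinomial_nhds_zero (α : ℂ) (hp : ‖p‖ < 1) :
    Tendsto (fun w => ∑' n, qp α p n / qp p p n * w ^ n) (𝓝 0) (𝓝 1) := by
  obtain ⟨M, hM⟩ := exists_norm_qp_div_qp_le α hp
  have hbound :
      ∀ᶠ w in 𝓝 (0 : ℂ), ∀ n, ‖qp α p n / qp p p n * w ^ n‖ ≤ M * (1 / 2) ^ n := by
    filter_upwards [Metric.closedBall_mem_nhds (0 : ℂ) one_half_pos] with w hw n
    rw [mem_closedBall_zero_iff] at hw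
    rw [norm_mul, norm_pow]
    exact mul_le_mul (hM n) (pow_le_pow_left₀ (norm_nonneg w) hw n) (by positivity)
      ((norm_nonneg _).trans (hM n))
  have := tendsto_tsum_of_dominated_convergence
    ((summable_geometric_of_lt_one one_half_pos.le one_half_lt_one).mul_left M)
    (fun n => ((continuous_pow n).tendsto 0).const_mul (qp α p n / qp p p n)) hbound
  rw [tsum_eq_single 0 fun n hn => by rw [zero_pow hn, mul_zero]] at this
  simpa [qp] using this

theorem hasSum_qbinomial (α : ℂ) (hp : ‖p‖ < 1) (hz : ‖z‖ < 1) :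
    HasSum (fun n => qp α p n / qp p p n * z ^ n) (qpInf (α * z) p / qpInf z p) := by
  -- `S(w) (w;p)_∞` and `(αw;p)_∞` both satisfy `F(w) = (1 - αw) F(pw)`; iterating, their
  -- difference at `z` is `(αz;p)_N` times its value at `p^N z → 0`, where it vanishes.
  set S : ℂ → ℂ := fun w => ∑' n, qp α p n / qp p p n * w ^ n
  set E : ℂ → ℂ := fun w => S w * qpInf w p - qpInf (α * w) p
  have hstep : ∀ w : ℂ, ‖w‖ < 1 → E w = (1 - α * w) * E (p * w) := by
    intro w hw
    have h1 : qpInf w p = (1 - w) * qpInf (p * w) p := by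
      rw [qpInf_eq_one_sub_mul w hp, mul_comm w p]
    have h2 : qpInf (α * w) p = (1 - α * w) * qpInf (α * (p * w)) p := by
      rw [qpInf_eq_one_sub_mul _ hp, mul_assoc, mul_comm w p]
    simp only [E]
    rw [h1, h2]
    linear_combination qpInf (p * w) p * one_sub_mul_tsum_qbinomial α hp hw
  have hiter : ∀ N : ℕ, E z = qp (α * z) p N * E (p ^ N * z) := by
    intro N
    induction N with
    | zero => simp [qp]
    | succ N ih =>
      have hN : ‖p ^ N * z‖ < 1 := by
        simpa [mul_comm] using (norm_mul_pow_le z hp.le N).trans_lt hz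
      rw [ih, hstep _ hN, show p * (p ^ N * z) = p ^ (N + 1) * z by ring, qp, qp,
        Finset.prod_range_succ]
      ring
  have hE : Tendsto E (𝓝 0) (𝓝 0) := by
    have hαw : Tendsto (fun w : ℂ => α * w) (𝓝 0) (𝓝 0) := by
      simpa using (tendsto_id (x := 𝓝 (0 : ℂ))).const_mul α
    simpa using ((tendsto_tsum_qbinomial_nhds_zero α hp).mul (tendsto_qpInf_nhds_zero hp)).sub
      ((tendsto_qpInf_nhds_zero hp).comp hαw)
  have hpow : Tendsto (fun N : ℕ => p ^ N * z) atTop (𝓝 0) := by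
    simpa using (tendsto_pow_atTop_nhds_zero_of_norm_lt_one hp).mul_const z
  have hEz : E z = 0 := by
    simpa using tendsto_nhds_unique (tendsto_const_nhds.congr hiter)
      ((tendsto_qp_qpInf (α * z) hp).mul (hE.comp hpow))
  have hS : S z * qpInf z p = qpInf (α * z) p := sub_eq_zero.1 hEz
  rw [← hS, mul_div_cancel_right₀ _ (qpInf_ne_zero hz hp)]
  exact (summable_norm_qbinomial α hp hz).of_norm.hasSum

end QBinomial

lemma tsum_mul_tsum_mul_pow_mul_comm {a c : ℕ → ℂ} {Q : ℂ} (ha : Summable (‖a ·‖))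
    (hc : Summable (‖c ·‖)) (hQ : ‖Q‖ ≤ 1) :
    ∑' j, a j * ∑' k, c k * Q ^ (j * k) = ∑' k, c k * ∑' j, a j * Q ^ (j * k) := by
  have hsum : Summable fun x : ℕ × ℕ => a x.1 * c x.2 * Q ^ (x.1 * x.2) := by
    refine (ha.mul_norm hc).of_norm_bounded fun x => ?_
    simpa [mul_comm (Q ^ _)] using norm_mul_pow_le (a x.1 * c x.2) hQ (x.1 * x.2)
  calc ∑' j, a j * ∑' k, c k * Q ^ (j * k) = ∑' j, ∑' k, a j * c k * Q ^ (j * k) := by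
        simp only [← tsum_mul_left, mul_assoc]
    _ = ∑' k, ∑' j, a j * c k * Q ^ (j * k) := hsum.tsum_comm.symm
    _ = ∑' k, c k * ∑' j, a j * Q ^ (j * k) := by
        simp only [← tsum_mul_left]
        exact tsum_congr fun k => tsum_congr fun j => by ring

lemma tsum_qbinomial_mul_tsum_qbinomial_comm {P p Q x y : ℂ} (α γ : ℂ) (hP : ‖P‖ < 1)
    (hp : ‖p‖ < 1) (hQ : ‖Q‖ ≤ 1) (hx : ‖x‖ < 1) (hy : ‖y‖ < 1) :
    ∑' j, qp α P j / qp P P j * x ^ j * ∑' k, qp γ p k / qp p p k * (y * Q ^ j) ^ k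
      = ∑' k, qp γ p k / qp p p k * y ^ k * ∑' j, qp α P j / qp P P j * (x * Q ^ k) ^ j := by
  have := tsum_mul_tsum_mul_pow_mul_comm (summable_norm_qbinomial α hP hx)
    (summable_norm_qbinomial γ hp hy) hQ
  refine (tsum_congr fun j => ?_).trans (this.trans (tsum_congr fun k => ?_)) <;>
    exact congrArg _ (tsum_congr fun _ => by ring)

lemma qpc_div_qpc1_eq_mul_tsum (c d p R : ℂ) (hd : d ≠ 0) (hp : ‖p‖ < 1)
    (hdp : ‖d * p‖ < 1) (hR : ‖R‖ ≤ 1) (j : ℕ) :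
    qpc (d * p) p R j / qpc1 c p R j
      = qpInf (d * p) p / qpInf c p * ∑' k, qp (c / d) p k / qp p p k * (d * p * R ^ j) ^ k := by
  have hz : ‖d * p * R ^ j‖ < 1 := (norm_mul_pow_le _ hR j).trans_lt hdp
  rw [(hasSum_qbinomial (c / d) hp hz).tsum_eq, qpc, qpc1,
    show c / d * (d * p * R ^ j) = c * p * R ^ j by field_simp, div_div_div_eq]
  ring

theorem entry_1_4_1_bibasic_general (q h t a b c d : ℂ)
    (hqh : ‖q ^ h‖ < 1) (hqt : ‖q ^ t‖ < 1)
    (hqht : ‖q ^ (h * t)‖ < 1)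
    (ha : a ≠ 0) (hd : d ≠ 0)
    (haq : ‖a * q ^ t‖ < 1) (hdq : ‖d * q ^ h‖ < 1)
    (h4 : ∀ j : ℕ, qpc1 (c * q) (q ^ h) (q ^ (h * t)) j ≠ 0) :
    (qpInf (a * q ^ t) (q ^ t) * qpInf (c * q) (q ^ h) /
        (qpInf (-b * q) (q ^ t) * qpInf (d * q ^ h) (q ^ h))) *
      ∑' j : ℕ, (qp (-b * q / a) (q ^ t) j / qp (q ^ t) (q ^ t) j) *
        (qpc (d * q ^ h) (q ^ h) (q ^ (h * t)) j / qpc1 (c * q) (q ^ h) (q ^ (h * t)) j) *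
        (a * q ^ t) ^ j
    = ∑' k : ℕ, (qp (c * q / d) (q ^ h) k / qp (q ^ h) (q ^ h) k) *
        (qpc (a * q ^ t) (q ^ t) (q ^ (h * t)) k / qpc1 (-b * q) (q ^ t) (q ^ (h * t)) k) *
        (d * q ^ h) ^ k := by
  have hC : qpInf (c * q) (q ^ h) ≠ 0 := (div_ne_zero_iff.1 (h4 0)).1
  have hY : qpInf (d * q ^ h) (q ^ h) ≠ 0 := qpInf_ne_zero hdq hqh
  have hpref : qpInf (a * q ^ t) (q ^ t) * qpInf (c * q) (q ^ h) /
      (qpInf (-b * q) (q ^ t) * qpInf (d * q ^ h) (q ^ h)) *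
      (qpInf (d * q ^ h) (q ^ h) / qpInf (c * q) (q ^ h))
      = qpInf (a * q ^ t) (q ^ t) / qpInf (-b * q) (q ^ t) := by
    rw [div_mul_div_comm, mul_right_comm _ (qpInf (c * q) _),
      mul_div_mul_right _ _ hC, mul_div_mul_right _ _ hY]
  simp_rw [qpc_div_qpc1_eq_mul_tsum (c * q) d _ _ hd hqh hdq hqht.le,
    qpc_div_qpc1_eq_mul_tsum (-b * q) a _ _ ha hqt haq hqht.le]
  calc _ = qpInf (a * q ^ t) (q ^ t) / qpInf (-b * q) (q ^ t) *
        ∑' j, qp (-b * q / a) (q ^ t) j / qp (q ^ t) (q ^ t) j * (a * q ^ t) ^ j *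
          ∑' k, qp (c * q / d) (q ^ h) k / qp (q ^ h) (q ^ h) k *
            (d * q ^ h * (q ^ (h * t)) ^ j) ^ k := by
        rw [← hpref, mul_assoc _ (qpInf (d * q ^ h) (q ^ h) / qpInf (c * q) (q ^ h))]
        exact congrArg _ ((tsum_congr fun j => by ring).trans tsum_mul_left)
    _ = qpInf (a * q ^ t) (q ^ t) / qpInf (-b * q) (q ^ t) *
        ∑' k, qp (c * q / d) (q ^ h) k / qp (q ^ h) (q ^ h) k * (d * q ^ h) ^ k *
          ∑' j, qp (-b * q / a) (q ^ t) j / qp (q ^ t) (q ^ t) j *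
            (a * q ^ t * (q ^ (h * t)) ^ k) ^ j := by
        rw [tsum_qbinomial_mul_tsum_qbinomial_comm _ _ hqt hqh hqht.le haq hdq]
    _ = _ := tsum_mul_left.symm.trans (tsum_congr fun k => by ring)

/-- bibasic form of Ramanujan's Entry 1.4.1. -/
theorem entry_1_4_1_bibasic (q h t a b c d : ℂ)
    (hqh : ‖q ^ h‖ < 1) (hqt : ‖q ^ t‖ < 1)
    (hqht : ‖q ^ (h * t)‖ < 1)
    (ha : a ≠ 0) (hd : d ≠ 0)
    (haq : ‖a * q ^ t‖ < 1) (hdq : ‖d * q ^ h‖ < 1)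
    (h1 : qpInf (-b * q) (q ^ t) ≠ 0)
    (h2 : qpInf (d * q ^ h) (q ^ h) ≠ 0)
    (h3 : ∀ j : ℕ, qp (q ^ t) (q ^ t) j ≠ 0)
    (h4 : ∀ j : ℕ, qpc1 (c * q) (q ^ h) (q ^ (h * t)) j ≠ 0)
    (h5 : ∀ j : ℕ, qpInf (d * q ^ h * (q ^ (h * t)) ^ j) (q ^ h) ≠ 0)
    (h6 : ∀ j : ℕ, qpInf (c * q * q ^ h * (q ^ (h * t)) ^ j) (q ^ h) ≠ 0)
    (h7 : ∀ k : ℕ, qp (q ^ h) (q ^ h) k ≠ 0)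
    (h8 : ∀ k : ℕ, qpc1 (-b * q) (q ^ t) (q ^ (h * t)) k ≠ 0)
    (h9 : ∀ k : ℕ, qpInf (a * q ^ t * (q ^ (h * t)) ^ k) (q ^ t) ≠ 0)
    (h10 : ∀ k : ℕ, qpInf (-b * q * q ^ t * (q ^ (h * t)) ^ k) (q ^ t) ≠ 0) :
    (qpInf (a * q ^ t) (q ^ t) * qpInf (c * q) (q ^ h) /
        (qpInf (-b * q) (q ^ t) * qpInf (d * q ^ h) (q ^ h))) *
      ∑' j : ℕ, (qp (-b * q / a) (q ^ t) j / qp (q ^ t) (q ^ t) j) *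
        (qpc (d * q ^ h) (q ^ h) (q ^ (h * t)) j / qpc1 (c * q) (q ^ h) (q ^ (h * t)) j) *
        (a * q ^ t) ^ j
    = ∑' k : ℕ, (qp (c * q / d) (q ^ h) k / qp (q ^ h) (q ^ h) k) *
        (qpc (a * q ^ t) (q ^ t) (q ^ (h * t)) k / qpc1 (-b * q) (q ^ t) (q ^ (h * t)) k) *
        (d * q ^ h) ^ k :=
  entry_1_4_1_bibasic_general q h t a b c d hqh hqt hqht ha hd haq hdq h4
end

section
/- Bibasic generalization of Entry 1.4.11: Let q, h, t be complex numbers with |q^h| < 1, |q^t| < 1, |q^{ht}| < 1 and |(q^t)^2| < 1 (principal complex powers), such that all denominators below are nonzero. Then ∑_{j=0}^∞ (q^t)^{2j} / [(q^t;q^t)_j · (q^h;q^h)_{tj}] = [1 / ((q^t;q^t)_∞ (q^h;q^h)_∞)] · ∑_{k=0}^∞ [(q^t;q^t)_{hk+1} / (q^h;q^h)_k] · (−1)^k · (q^h)^{k(k+1)/2}. -/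
open Complex

/-!
Write `a = q^t`, `b = q^h`, `c = q^{ht}`; the identity holds for any `a, b, c` in the open unit
disc. Expanding `(b c^j; b)_∞ = (b;b)_∞ / (b;b)_{tj}` by Euler's identity
`∑ (-1)^n Q^(n choose 2) z^n / (Q;Q)_n = (z;Q)_∞` turns the `j`-th term of the left side into a
series in `k`. The resulting double series converges absolutely, and summing it over `j` first
gives, by Euler's other identity `∑ z^n / (Q;Q)_n = 1 / (z;Q)_∞` with `z = a² c^k`, exactly the
`k`-th term of the right side.

Both Euler identities come from the functional equations `F z = (1 - z)^(∓1) F (Q z)` of the two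
power series, iterated `N` times, as `F (Q^N z) → F 0 = 1`.
-/

open Filter Topology Finset

lemma qp_succ (A Q : ℂ) (n : ℕ) : qp A Q (n + 1) = qp A Q n * (1 - A * Q ^ n) :=
  prod_range_succ _ _

lemma norm_mul_pow_le_norm {A Q : ℂ} (hQ : ‖Q‖ ≤ 1) (r : ℕ) : ‖A * Q ^ r‖ ≤ ‖A‖ := by
  rw [norm_mul, norm_pow]
  exact mul_le_of_le_one_right (norm_nonneg A) (pow_le_one₀ (norm_nonneg Q) hQ)

lemma mul_pow_ne_one {A Q : ℂ} (hA : ‖A‖ < 1) (hQ : ‖Q‖ ≤ 1) (r : ℕ) : A * Q ^ r ≠ 1 := by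
  intro h
  simpa [h] using (norm_mul_pow_le_norm (A := A) hQ r).trans_lt hA

lemma summable_norm_mul_pow {Q : ℂ} (hQ : ‖Q‖ < 1) (A : ℂ) :
    Summable fun r : ℕ => ‖A * Q ^ r‖ := by
  simpa [norm_mul, norm_pow] using
    (summable_geometric_of_lt_one (norm_nonneg Q) hQ).mul_left ‖A‖

lemma multipliable_one_sub_mul_pow {Q : ℂ} (hQ : ‖Q‖ < 1) (A : ℂ) :
    Multipliable fun r : ℕ => 1 - A * Q ^ r := by
  simpa [sub_eq_add_neg] using
    multipliable_one_add_of_summable (f := fun r : ℕ => -(A * Q ^ r))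
      (by simpa using summable_norm_mul_pow hQ A)

lemma tendsto_qp {Q : ℂ} (hQ : ‖Q‖ < 1) (A : ℂ) :
    Tendsto (qp A Q) atTop (𝓝 (qpInf A Q)) :=
  (multipliable_one_sub_mul_pow hQ A).hasProd.tendsto_prod_nat

lemma qpInf_ne_zero_s7 {A Q : ℂ} (hQ : ‖Q‖ < 1) (hA : ∀ r, A * Q ^ r ≠ 1) : qpInf A Q ≠ 0 := by
  simpa [qpInf, sub_eq_add_neg] using
    tprod_one_add_ne_zero_of_summable (f := fun r : ℕ => -(A * Q ^ r))
      (fun r => by simpa [← sub_eq_add_neg, sub_eq_zero] using (hA r).symm)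
      (by simpa using summable_norm_mul_pow hQ A)

lemma exists_norm_inv_qp_le {A Q : ℂ} (hQ : ‖Q‖ < 1) (hA : ∀ r, A * Q ^ r ≠ 1) :
    ∃ C, ∀ n, ‖(qp A Q n)⁻¹‖ ≤ C := by
  obtain ⟨C, hC⟩ := ((tendsto_qp hQ A).inv₀ (qpInf_ne_zero_s7 hQ hA)).norm.bddAbove_range
  exact ⟨C, fun n => hC ⟨n, rfl⟩⟩

section PowerSeries

variable {a : ℕ → ℂ} {C : ℝ}

lemma summable_mul_pow_of_norm_le (ha : ∀ n, ‖a n‖ ≤ C) {w : ℂ} (hw : ‖w‖ < 1) :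
    Summable fun n => a n * w ^ n :=
  .of_norm_bounded ((summable_geometric_of_lt_one (norm_nonneg w) hw).mul_left C) fun n => by
    rw [norm_mul, norm_pow]
    exact mul_le_mul_of_nonneg_right (ha n) (by positivity)

lemma tendsto_tsum_mul_pow_nhds_zero (ha : ∀ n, ‖a n‖ ≤ C) :
    Tendsto (fun w => ∑' n, a n * w ^ n) (𝓝 0) (𝓝 (a 0)) := by
  have hlim : ∑' n, a n * (0 : ℂ) ^ n = a 0 := by
    rw [tsum_eq_single 0 fun n hn => by simp [hn]]
    simp
  rw [← hlim]
  refine tendsto_tsum_of_dominated_convergence (bound := fun n => C * (1 / 2) ^ n)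
    (summable_geometric_two.mul_left C) (fun n => ((continuous_pow n).const_mul (a n)).tendsto 0)
    ?_
  filter_upwards [Metric.ball_mem_nhds (0 : ℂ) (by norm_num : (0 : ℝ) < 1 / 2)] with w hw n
  rw [mem_ball_zero_iff] at hw
  rw [norm_mul, norm_pow]
  exact mul_le_mul (ha n) (pow_le_pow_left₀ (norm_nonneg w) hw.le n) (by positivity)
    ((norm_nonneg _).trans (ha n))

lemma tsum_mul_pow_sub_tsum_mul_mul_pow (ha : ∀ n, ‖a n‖ ≤ C) {Q w : ℂ} (hQ : ‖Q‖ ≤ 1)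
    (hw : ‖w‖ < 1) :
    ∑' n, a n * w ^ n - ∑' n, a n * (Q * w) ^ n
      = w * ∑' n, a (n + 1) * (1 - Q ^ (n + 1)) * w ^ n := by
  have hQw : ‖Q * w‖ < 1 := by
    rw [norm_mul]; exact (mul_le_of_le_one_left (norm_nonneg w) hQ).trans_lt hw
  rw [← (summable_mul_pow_of_norm_le ha hw).tsum_sub (summable_mul_pow_of_norm_le ha hQw),
    ((summable_mul_pow_of_norm_le ha hw).sub (summable_mul_pow_of_norm_le ha hQw)).tsum_eq_zero_add,
    ← tsum_mul_left]
  simp only [pow_zero, mul_one, sub_self, zero_add]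
  exact tsum_congr fun n => by ring

end PowerSeries

lemma eq_of_eq_mul_comp_mul {F φ : ℂ → ℂ} {Q z P : ℂ} (hQ : ‖Q‖ < 1) (hz : ‖z‖ < 1)
    (hF : ∀ w, ‖w‖ < 1 → F w = φ w * F (Q * w)) (hF0 : Tendsto F (𝓝 0) (𝓝 1))
    (hφ : Tendsto (fun N => ∏ r ∈ range N, φ (z * Q ^ r)) atTop (𝓝 P)) :
    F z = P := by
  have hiter : ∀ N, F z = (∏ r ∈ range N, φ (z * Q ^ r)) * F (z * Q ^ N) := by
    intro N
    induction N with
    | zero => simp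
    | succ N ih =>
      rw [ih, hF _ ((norm_mul_pow_le_norm hQ.le N).trans_lt hz), prod_range_succ, pow_succ,
        mul_assoc, mul_comm Q, ← mul_assoc z]
  have hzQ : Tendsto (fun N => z * Q ^ N) atTop (𝓝 0) := by
    simpa using (tendsto_pow_atTop_nhds_zero_of_norm_lt_one hQ).const_mul z
  have := hφ.mul (hF0.comp hzQ)
  rw [mul_one] at this
  exact tendsto_nhds_unique (tendsto_const_nhds.congr hiter) this

lemma inv_qp_self_succ_mul {Q : ℂ} (hQ : ‖Q‖ < 1) (n : ℕ) :
    (qp Q Q (n + 1))⁻¹ * (1 - Q ^ (n + 1)) = (qp Q Q n)⁻¹ := by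
  have hn : 1 - Q * Q ^ n ≠ 0 := sub_ne_zero.mpr (mul_pow_ne_one hQ hQ.le n).symm
  rw [qp_succ, pow_succ', mul_inv, mul_assoc, inv_mul_cancel₀ hn, mul_one]

lemma tendsto_prod_inv_qp {Q z : ℂ} (hQ : ‖Q‖ < 1) (hz : ‖z‖ < 1) :
    Tendsto (fun N => ∏ r ∈ range N, (1 - z * Q ^ r)⁻¹) atTop (𝓝 (qpInf z Q)⁻¹) := by
  simpa only [qp, prod_inv_distrib] using
    (tendsto_qp hQ z).inv₀ (qpInf_ne_zero_s7 hQ (mul_pow_ne_one hz hQ.le))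

theorem tsum_pow_div_qp {Q z : ℂ} (hQ : ‖Q‖ < 1) (hz : ‖z‖ < 1) :
    ∑' n, z ^ n / qp Q Q n = (qpInf z Q)⁻¹ := by
  obtain ⟨C, hC⟩ := exists_norm_inv_qp_le hQ (mul_pow_ne_one hQ hQ.le)
  simp only [div_eq_mul_inv, mul_comm (z ^ _)]
  refine eq_of_eq_mul_comp_mul (F := fun w => ∑' n, (qp Q Q n)⁻¹ * w ^ n)
    (φ := fun w => (1 - w)⁻¹) hQ hz (fun w hw => ?_)
    (by simpa [qp] using tendsto_tsum_mul_pow_nhds_zero hC) (tendsto_prod_inv_qp hQ hz)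
  have hshift := tsum_mul_pow_sub_tsum_mul_mul_pow hC hQ.le hw
  simp only [inv_qp_self_succ_mul hQ] at hshift
  have hw1 : 1 - w ≠ 0 := sub_ne_zero.mpr (fun h => by simp [← h] at hw)
  rw [eq_inv_mul_iff_mul_eq₀ hw1]
  linear_combination hshift

theorem tsum_neg_one_pow_mul_pow_choose_mul_pow_div_qp {Q z : ℂ} (hQ : ‖Q‖ < 1)
    (hz : ‖z‖ < 1) :
    ∑' n, (-1) ^ n * Q ^ n.choose 2 * z ^ n / qp Q Q n = qpInf z Q := by
  obtain ⟨C, hC⟩ := exists_norm_inv_qp_le hQ (mul_pow_ne_one hQ hQ.le)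
  have ha : ∀ n, ‖(-1) ^ n * Q ^ n.choose 2 * (qp Q Q n)⁻¹‖ ≤ C := fun n => by
    rw [norm_mul, norm_mul, norm_pow, norm_neg, norm_one, one_pow, one_mul, norm_pow]
    exact (mul_le_of_le_one_left (norm_nonneg _) (pow_le_one₀ (norm_nonneg Q) hQ.le)).trans (hC n)
  have hrec : ∀ n, (-1) ^ (n + 1) * Q ^ (n + 1).choose 2 * (qp Q Q (n + 1))⁻¹ * (1 - Q ^ (n + 1))
      = -Q ^ n * ((-1) ^ n * Q ^ n.choose 2 * (qp Q Q n)⁻¹) := fun n => by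
    rw [mul_assoc, inv_qp_self_succ_mul hQ, Nat.choose_succ_succ', Nat.choose_one_right]
    ring
  simp only [div_eq_mul_inv, mul_right_comm _ (z ^ _)]
  refine eq_of_eq_mul_comp_mul
    (F := fun w => ∑' n, (-1) ^ n * Q ^ n.choose 2 * (qp Q Q n)⁻¹ * w ^ n) (φ := fun w => 1 - w)
    hQ hz (fun w hw => ?_) (by simpa [qp] using tendsto_tsum_mul_pow_nhds_zero ha)
    (tendsto_qp hQ z)
  have hshift := tsum_mul_pow_sub_tsum_mul_mul_pow ha hQ.le hw
  simp only [hrec] at hshift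
  have hdil : ∑' n, -Q ^ n * ((-1) ^ n * Q ^ n.choose 2 * (qp Q Q n)⁻¹) * w ^ n
      = -∑' n, (-1) ^ n * Q ^ n.choose 2 * (qp Q Q n)⁻¹ * (Q * w) ^ n := by
    rw [← tsum_neg]
    exact tsum_congr fun n => by ring
  linear_combination hshift + w * hdil

lemma mul_succ_div_two_eq_choose_two_add (k : ℕ) : k * (k + 1) / 2 = k.choose 2 + k := by
  have h := Nat.choose_succ_succ' k 1
  rw [Nat.choose_one_right, Nat.choose_two_right, Nat.add_sub_cancel] at h
  rw [mul_comm, h, add_comm]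

noncomputable def bibasicTerm (a b c : ℂ) (j k : ℕ) : ℂ :=
  (a * a) ^ j / qp a a j * ((-1) ^ k * b ^ k.choose 2 * (b * c ^ j) ^ k / qp b b k)

section Bibasic

variable {a b c : ℂ}

lemma norm_mul_self_lt_one (ha : ‖a‖ < 1) : ‖a * a‖ < 1 :=
  (norm_mul_le a a).trans_lt (mul_lt_one_of_nonneg_of_lt_one_left (norm_nonneg a) ha ha.le)

lemma bibasicTerm_eq (j k : ℕ) :
    bibasicTerm a b c j k
      = (a * a * c ^ k) ^ j / qp a a j * ((-1) ^ k * b ^ k.choose 2 * b ^ k / qp b b k) := by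
  simp only [bibasicTerm, mul_pow, ← pow_mul, mul_comm j k]
  ring

lemma tsum_bibasicTerm_right (hb : ‖b‖ < 1) (hc : ‖c‖ < 1) (j : ℕ) :
    ∑' k, bibasicTerm a b c j k = (a * a) ^ j / qp a a j * qpInf (b * c ^ j) b := by
  simp only [bibasicTerm]
  rw [tsum_mul_left, tsum_neg_one_pow_mul_pow_choose_mul_pow_div_qp hb
    ((norm_mul_pow_le_norm hc.le j).trans_lt hb)]

lemma tsum_bibasicTerm_left (ha : ‖a‖ < 1) (hc : ‖c‖ < 1) (k : ℕ) :
    ∑' j, bibasicTerm a b c j k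
      = (qpInf (a * a * c ^ k) a)⁻¹ * ((-1) ^ k * b ^ k.choose 2 * b ^ k / qp b b k) := by
  have haa := norm_mul_self_lt_one ha
  simp only [bibasicTerm_eq]
  rw [tsum_mul_right, tsum_pow_div_qp ha ((norm_mul_pow_le_norm hc.le k).trans_lt haa)]

lemma summable_bibasicTerm (ha : ‖a‖ < 1) (hb : ‖b‖ < 1) (hc : ‖c‖ < 1) :
    Summable (Function.uncurry (bibasicTerm a b c)) := by
  have haa := norm_mul_self_lt_one ha
  obtain ⟨Ca, hCa⟩ := exists_norm_inv_qp_le ha (mul_pow_ne_one ha ha.le)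
  obtain ⟨Cb, hCb⟩ := exists_norm_inv_qp_le hb (mul_pow_ne_one hb hb.le)
  have hCa0 : 0 ≤ Ca := (norm_nonneg _).trans (hCa 0)
  have hCb0 : 0 ≤ Cb := (norm_nonneg _).trans (hCb 0)
  have hbound : ∀ p : ℕ × ℕ,
      ‖bibasicTerm a b c p.1 p.2‖ ≤ (Ca * ‖a * a‖ ^ p.1) * (Cb * ‖b‖ ^ p.2) := by
    rintro ⟨j, k⟩
    have h1 : ‖(a * a * c ^ k) ^ j / qp a a j‖ ≤ Ca * ‖a * a‖ ^ j := by
      rw [div_eq_mul_inv, norm_mul, norm_pow, mul_comm]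
      exact mul_le_mul (hCa j) (pow_le_pow_left₀ (norm_nonneg _) (norm_mul_pow_le_norm hc.le k) j)
        (by positivity) hCa0
    have h2 : ‖(-1) ^ k * b ^ k.choose 2 * b ^ k / qp b b k‖ ≤ Cb * ‖b‖ ^ k := by
      rw [div_eq_mul_inv, norm_mul, norm_mul, norm_mul, norm_pow, norm_pow, norm_pow, norm_neg,
        norm_one, one_pow, one_mul, mul_comm]
      exact mul_le_mul (hCb k) (mul_le_of_le_one_left (by positivity)
        (pow_le_one₀ (norm_nonneg b) hb.le)) (by positivity) hCb0
    rw [bibasicTerm_eq, norm_mul]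
    exact mul_le_mul h1 h2 (norm_nonneg _) (by positivity)
  have hsum : Summable fun p : ℕ × ℕ => (Ca * ‖a * a‖ ^ p.1) * (Cb * ‖b‖ ^ p.2) :=
    Summable.mul_of_nonneg (f := fun j => Ca * ‖a * a‖ ^ j) (g := fun k => Cb * ‖b‖ ^ k)
      ((summable_geometric_of_lt_one (norm_nonneg _) haa).mul_left Ca)
      ((summable_geometric_of_lt_one (norm_nonneg _) hb).mul_left Cb)
      (fun j => mul_nonneg hCa0 (pow_nonneg (norm_nonneg _) j))
      (fun k => mul_nonneg hCb0 (pow_nonneg (norm_nonneg _) k))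
  exact .of_norm_bounded hsum hbound

theorem tsum_pow_two_mul_div_qp_mul_qpc (ha : ‖a‖ < 1) (hb : ‖b‖ < 1) (hc : ‖c‖ < 1) :
    ∑' j : ℕ, a ^ (2 * j) / (qp a a j * qpc b b c j)
      = (1 / (qpInf a a * qpInf b b)) *
        ∑' k : ℕ, (qpc1 a a c k / qp b b k) * (-1 : ℂ) ^ k * b ^ (k * (k + 1) / 2) := by
  have hrow : ∀ j, a ^ (2 * j) / (qp a a j * qpc b b c j)
      = (qpInf b b)⁻¹ * ∑' k, bibasicTerm a b c j k := fun j => by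
    rw [tsum_bibasicTerm_right hb hc, qpc, pow_mul, sq]
    simp only [div_eq_mul_inv, mul_inv, inv_inv]
    ring
  have hcol : ∀ k, (qpc1 a a c k / qp b b k) * (-1 : ℂ) ^ k * b ^ (k * (k + 1) / 2)
      = qpInf a a * ∑' j, bibasicTerm a b c j k := fun k => by
    rw [tsum_bibasicTerm_left ha hc, qpc1, mul_succ_div_two_eq_choose_two_add, pow_add]
    simp only [div_eq_mul_inv]
    ring
  have hA : qpInf a a ≠ 0 := qpInf_ne_zero_s7 ha (mul_pow_ne_one ha ha.le)
  rw [tsum_congr hrow, tsum_congr hcol, tsum_mul_left, tsum_mul_left,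
    (summable_bibasicTerm ha hb hc).tsum_comm, one_div, mul_inv, mul_comm (qpInf a a)⁻¹,
    mul_assoc, inv_mul_cancel_left₀ hA]

end Bibasic

theorem entry_1_4_11_bibasic_general (q h t : ℂ)
    (hqh : ‖q ^ h‖ < 1) (hqt : ‖q ^ t‖ < 1)
    (hqht : ‖q ^ (h * t)‖ < 1) :
    ∑' j : ℕ, (q ^ t) ^ (2 * j) /
        (qp (q ^ t) (q ^ t) j * qpc (q ^ h) (q ^ h) (q ^ (h * t)) j)
    = (1 / (qpInf (q ^ t) (q ^ t) * qpInf (q ^ h) (q ^ h))) *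
      ∑' k : ℕ, (qpc1 (q ^ t) (q ^ t) (q ^ (h * t)) k / qp (q ^ h) (q ^ h) k) *
        (-1 : ℂ) ^ k * (q ^ h) ^ (k * (k + 1) / 2) :=
  tsum_pow_two_mul_div_qp_mul_qpc hqt hqh hqht

/-- bibasic generalization of Entry 1.4.11. -/
theorem entry_1_4_11_bibasic (q h t : ℂ)
    (hqh : ‖q ^ h‖ < 1) (hqt : ‖q ^ t‖ < 1)
    (hqht : ‖q ^ (h * t)‖ < 1)
    (hqt2 : ‖(q ^ t) ^ 2‖ < 1)
    (h1 : ∀ j : ℕ, qp (q ^ t) (q ^ t) j ≠ 0)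
    (h2 : ∀ j : ℕ, qpc (q ^ h) (q ^ h) (q ^ (h * t)) j ≠ 0)
    (h3 : ∀ j : ℕ, qpInf (q ^ h * (q ^ (h * t)) ^ j) (q ^ h) ≠ 0)
    (h4 : qpInf (q ^ t) (q ^ t) ≠ 0)
    (h5 : qpInf (q ^ h) (q ^ h) ≠ 0)
    (h6 : ∀ k : ℕ, qp (q ^ h) (q ^ h) k ≠ 0)
    (h7 : ∀ k : ℕ, qpInf (q ^ t * q ^ t * (q ^ (h * t)) ^ k) (q ^ t) ≠ 0) :
    ∑' j : ℕ, (q ^ t) ^ (2 * j) /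
        (qp (q ^ t) (q ^ t) j * qpc (q ^ h) (q ^ h) (q ^ (h * t)) j)
    = (1 / (qpInf (q ^ t) (q ^ t) * qpInf (q ^ h) (q ^ h))) *
      ∑' k : ℕ, (qpc1 (q ^ t) (q ^ t) (q ^ (h * t)) k / qp (q ^ h) (q ^ h) k) *
        (-1 : ℂ) ^ k * (q ^ h) ^ (k * (k + 1) / 2) :=
  entry_1_4_11_bibasic_general q h t hqh hqt hqht
end
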